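/- Let n ≥ 1, μ > 0, and let L : ℝ → Matrix (Fin n) (Fin n) ℝ be such that for every t: L(t) is symmetric, L(t) *ᵥ 𝟙 = 0, and ⟪y, L(t) *ᵥ y⟫ ≥ μ‖y‖² for every y ∈ ℝⁿ with ∑ᵢ yᵢ = 0. Let y : ℝ → (Fin n → ℝ) be differentiable with y′(t) = −L(t) *ᵥ y(t) for all t ≥ 0 and ∑ᵢ yᵢ(0) = 0. Then ∑ᵢ yᵢ(t) = 0 for all t ≥ 0 and the disagreement decays exponentially: ‖y(t)‖ ≤ e^{−μ t} ‖y(0)‖ for all t ≥ 0. -/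

import Mathlib

open Filter Matrix Set Real

/-!
The symmetric Laplacians annihilate `𝟙` on both sides, so `∑ᵢ (L y)ᵢ = 𝟙ᵀ L y = 0` and the sum of
the coordinates of `y` has derivative zero: `y` stays in the zero-sum subspace. There the
connectivity bound gives `d/dt ‖y‖² = -2 ⟪y, L y⟫ ≤ -2μ ‖y‖²`, and Grönwall's inequality yields
`‖y(t)‖² ≤ e^{-2μt} ‖y(0)‖²`.
-/

theorem Matrix.sum_mulVec_eq_zero_of_isSymm {ι R : Type*} [Fintype ι] [CommSemiring R]
    {A : Matrix ι ι R} (hA : A.IsSymm) (hA₁ : A *ᵥ (fun _ => 1) = 0) (v : ι → R) :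
    ∑ i, (A *ᵥ v) i = 0 := by
  calc ∑ i, (A *ᵥ v) i = (fun _ => 1) ⬝ᵥ (A *ᵥ v) := by simp [dotProduct]
    _ = (Aᵀ *ᵥ fun _ => 1) ⬝ᵥ v := by rw [dotProduct_mulVec, mulVec_transpose]
    _ = 0 := by rw [hA.eq, hA₁, zero_dotProduct]

section Derivatives

variable {ι : Type*} [Fintype ι] {y : ℝ → ι → ℝ} {y' : ι → ℝ} {t : ℝ}

theorem HasDerivAt.sum_apply (h : HasDerivAt y y' t) :
    HasDerivAt (fun s => ∑ i, y s i) (∑ i, y' i) t :=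
  HasDerivAt.fun_sum fun i _ => hasDerivAt_pi.mp h i

theorem HasDerivAt.sum_apply_sq (h : HasDerivAt y y' t) :
    HasDerivAt (fun s => ∑ i, y s i ^ 2) (2 * ∑ i, y t i * y' i) t := by
  refine (HasDerivAt.fun_sum fun i _ => (hasDerivAt_pi.mp h i).fun_pow 2).congr_deriv ?_
  simp only [Finset.mul_sum]
  exact Finset.sum_congr rfl fun i _ => by push_cast; ring

end Derivatives

theorem eq_apply_zero_of_hasDerivAt_zero {E : Type*} [NormedAddCommGroup E] [NormedSpace ℝ E]
    {f : ℝ → E} (hf : ∀ t, 0 ≤ t → HasDerivAt f 0 t) {t : ℝ} (ht : 0 ≤ t) : f t = f 0 :=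
  constant_of_has_deriv_right_zero (fun s hs => (hf s hs.1).continuousAt.continuousWithinAt)
    (fun s hs => (hf s hs.1).hasDerivWithinAt) t ⟨ht, le_rfl⟩

theorem le_mul_exp_of_hasDerivAt_le_mul {f f' : ℝ → ℝ} {K : ℝ}
    (hf : ∀ t, 0 ≤ t → HasDerivAt f (f' t) t) (bound : ∀ t, 0 ≤ t → f' t ≤ K * f t)
    {t : ℝ} (ht : 0 ≤ t) : f t ≤ f 0 * exp (K * t) := by
  simpa [gronwallBound_ε0] using
    le_gronwallBound_of_liminf_deriv_right_le (ε := 0) (f' := f')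
      (fun s hs => (hf s hs.1).continuousAt.continuousWithinAt)
      (fun s hs _ hr => (hf s hs.1).hasDerivWithinAt.liminf_right_slope_le hr) le_rfl
      (fun s hs => by simpa using bound s hs.1) t ⟨ht, le_rfl⟩

theorem disagreement_exponential_decay_general
    (n : ℕ) (μ : ℝ)
    (L : ℝ → Matrix (Fin n) (Fin n) ℝ)
    (hsymm : ∀ t, (L t).IsSymm)
    (hones : ∀ t, (L t) *ᵥ (fun _ => (1 : ℝ)) = 0)
    (hconn : ∀ t, ∀ y : Fin n → ℝ, (∑ i, y i) = 0 →
      μ * (∑ i, (y i) ^ 2) ≤ ∑ i, y i * ((L t) *ᵥ y) i)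
    (y : ℝ → Fin n → ℝ)
    (hode : ∀ t, 0 ≤ t → HasDerivAt y (-((L t) *ᵥ y t)) t)
    (hzero : ∑ i, y 0 i = 0) :
    (∀ t, 0 ≤ t → ∑ i, y t i = 0) ∧
    (∀ t, 0 ≤ t →
      Real.sqrt (∑ i, (y t i) ^ 2) ≤ Real.exp (-μ * t) * Real.sqrt (∑ i, (y 0 i) ^ 2)) := by
  have hsum : ∀ t, 0 ≤ t → ∑ i, y t i = 0 := fun t ht => by
    refine hzero ▸ eq_apply_zero_of_hasDerivAt_zero (f := fun s => ∑ i, y s i) (fun s hs => ?_) ht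
    simpa [sum_mulVec_eq_zero_of_isSymm (hsymm s) (hones s)] using (hode s hs).sum_apply
  refine ⟨hsum, fun t ht => ?_⟩
  have hsq : ∑ i, y t i ^ 2 ≤ (∑ i, y 0 i ^ 2) * exp (-2 * μ * t) := by
    refine le_mul_exp_of_hasDerivAt_le_mul (fun s hs => (hode s hs).sum_apply_sq) (fun s hs => ?_) ht
    have hcoercive := hconn s (y s) (hsum s hs)
    simp only [Pi.neg_apply, mul_neg, Finset.sum_neg_distrib]
    linarith
  calc √(∑ i, y t i ^ 2) ≤ √((∑ i, y 0 i ^ 2) * exp (-μ * t) ^ 2) :=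
        sqrt_le_sqrt (hsq.trans_eq (by rw [← exp_nat_mul]; ring_nf))
    _ = exp (-μ * t) * √(∑ i, y 0 i ^ 2) := by
        rw [sqrt_mul' _ (sq_nonneg _), sqrt_sq (exp_nonneg _), mul_comm]

/-- For the disagreement dynamics `y' = -L(t) y` with symmetric Laplacians
annihilating `𝟙` and a uniform connectivity bound `μ > 0` on the zero-sum subspace,
the zero-sum property is preserved and the disagreement decays exponentially. -/
theorem disagreement_exponential_decay
    (n : ℕ) (hn : 1 ≤ n) (μ : ℝ) (hμ : 0 < μ)
    (L : ℝ → Matrix (Fin n) (Fin n) ℝ)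
    (hsymm : ∀ t, (L t).IsSymm)
    (hones : ∀ t, (L t) *ᵥ (fun _ => (1 : ℝ)) = 0)
    (hconn : ∀ t, ∀ y : Fin n → ℝ, (∑ i, y i) = 0 →
      μ * (∑ i, (y i) ^ 2) ≤ ∑ i, y i * ((L t) *ᵥ y) i)
    (y : ℝ → Fin n → ℝ)
    (hdiff : Differentiable ℝ y)
    (hode : ∀ t, 0 ≤ t → HasDerivAt y (-((L t) *ᵥ y t)) t)
    (hzero : ∑ i, y 0 i = 0) :
    (∀ t, 0 ≤ t → ∑ i, y t i = 0) ∧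
    (∀ t, 0 ≤ t →
      Real.sqrt (∑ i, (y t i) ^ 2) ≤ Real.exp (-μ * t) * Real.sqrt (∑ i, (y 0 i) ^ 2)) :=
  disagreement_exponential_decay_general n μ L hsymm hones hconn y hode hzero
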